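/- (Completeness and persistence.) Let L be a list of pairs of elements of Fin N, and let H_final be the forest parent function obtained by starting from the identity function and folding the merge operation over L. Then (1) for every pair (i, j) ∈ L one has root H_final i = root H_final j; more generally, (2) the relation 'root H a = root H b' is monotone under merges: if root H a = root H b holds for the state H after processing some prefix of L, then root H' a = root H' b holds for the state H' after processing any longer prefix of L; once two points acquire a common root, later merge operations never separate them. -/
import Mathlib


/-- The root of `i` in the forest `H`: the fixed point of `H` reached by
iterating `H` starting from `i` (for a forest parent function on `Fin N`,
`N` iterations always suffice to reach the fixed point). -/
def root {N : ℕ} (H : Fin N → Fin N) (i : Fin N) : Fin N :=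
  H^[N] i

/-- The merge operation for a visited pair `(i, j)`: set the parent of
`root H i` to `root H j` when the two roots differ, do nothing otherwise. -/
def mergeStep {N : ℕ} (H : Fin N → Fin N) (p : Fin N × Fin N) :
    Fin N → Fin N :=
  if root H p.1 = root H p.2 then H
  else Function.update H (root H p.1) (root H p.2)

/-- The friends-of-friends union-find state obtained by starting from the
identity parent function and folding the merge operation over the list of
visited pairs `L`. -/
def runFOF {N : ℕ} (L : List (Fin N × Fin N)) : Fin N → Fin N :=
  L.foldl mergeStep id

def IsForest {N : ℕ} (H : Fin N → Fin N) : Prop :=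
  ∃ r : Fin N → ℕ, ∀ i, H i ≠ i → r (H i) < r i

lemma root_fixed {N : ℕ} {H : Fin N → Fin N} (h : IsForest H) (i : Fin N) :
    H (root H i) = root H i := by
  obtain ⟨r, hr⟩ := h
  by_contra hne
  have hnot : ∀ k ≤ N, H (H^[k] i) ≠ H^[k] i := by
    intro k hk heq
    apply hne
    show H (H^[N] i) = H^[N] i
    have : H^[N] i = H^[N - k] (H^[k] i) := by
      rw [← Function.iterate_add_apply]
      congr 1; omega
    rw [this, Function.iterate_fixed heq]
    exact heq
  set g : ℕ → ℕ := fun k => r (H^[k] i) with hg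
  have step : ∀ k ≤ N, g (k + 1) < g k := by
    intro k hk
    have := hr (H^[k] i) (hnot k hk)
    simpa [hg, Function.iterate_succ_apply'] using this
  have mono : ∀ a b : ℕ, a < b → b ≤ N + 1 → g b < g a := by
    intro a b hab hbN
    induction b with
    | zero => omega
    | succ b ih =>
      rcases Nat.lt_succ_iff_lt_or_eq.mp hab with h1 | h1
      · exact lt_trans (step b (by omega)) (ih h1 (by omega))
      · subst h1; exact step a (by omega)
  have hinj : Function.Injective (fun k : Fin (N + 1) => H^[(k : ℕ)] i) := by
    intro a b hab
    simp only [] at hab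
    by_contra hne2
    rcases lt_or_gt_of_ne (fun h => hne2 (Fin.ext h) : (a : ℕ) ≠ b) with h1 | h1
    · have := mono a b h1 (by omega)
      simp only [hg] at this
      simp only [hab] at this; omega
    · have := mono b a h1 (by omega)
      simp only [hg] at this
      simp only [hab] at this; omega
  have := Fintype.card_le_of_injective _ hinj
  simp at this

lemma root_parent {N : ℕ} {H : Fin N → Fin N} (h : IsForest H) (i : Fin N) :
    root H (H i) = root H i := by
  show H^[N] (H i) = H^[N] i
  rw [← Function.iterate_succ_apply, Function.iterate_succ_apply']
  exact root_fixed h i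

lemma root_iter {N : ℕ} {H : Fin N → Fin N} (h : IsForest H) (k : ℕ) (i : Fin N) :
    root H (H^[k] i) = root H i := by
  induction k with
  | zero => rfl
  | succ k ih => rw [Function.iterate_succ_apply', root_parent h, ih]

lemma root_of_fixed {N : ℕ} {H : Fin N → Fin N} {i : Fin N} (h : H i = i) :
    root H i = i := Function.iterate_fixed h N

lemma isForest_update {N : ℕ} {H : Fin N → Fin N} (h : IsForest H)
    {x y : Fin N} (hx : H x = x) (hy : H y = y) (hxy : x ≠ y) :
    IsForest (Function.update H x y) := by
  obtain ⟨r, hr⟩ := h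
  refine ⟨fun j => r j + (if root H j = x then r y + 1 else 0), ?_⟩
  intro j hj
  by_cases hjx : j = x
  · subst hjx
    rw [Function.update_self] at hj ⊢
    simp only []
    rw [root_of_fixed hy, if_neg (Ne.symm hxy), root_of_fixed hx, if_pos rfl]
    omega
  · rw [Function.update_of_ne hjx] at hj ⊢
    simp only []
    rw [root_parent ⟨r, hr⟩ j]
    have := hr j hj
    split <;> omega

lemma root_update {N : ℕ} {H : Fin N → Fin N} (h : IsForest H)
    {x y : Fin N} (hx : H x = x) (hy : H y = y) (hxy : x ≠ y) (i : Fin N) :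
    root (Function.update H x y) i = if root H i = x then y else root H i := by
  set H' := Function.update H x y with hH'
  have hF' : IsForest H' := isForest_update h hx hy hxy
  have hstep : ∀ j : Fin N, root H' (H j) = root H' j := by
    intro j
    by_cases hjj : H j = j
    · rw [hjj]
    · have hjx : j ≠ x := fun e => hjj (e ▸ hx)
      have : H j = H' j := (Function.update_of_ne hjx y H).symm
      rw [this, root_parent hF']
  have hiter : ∀ k : ℕ, root H' (H^[k] i) = root H' i := by
    intro k
    induction k with
    | zero => rfl
    | succ k ih => rw [Function.iterate_succ_apply', hstep, ih]
  have hroot : root H' (root H i) = root H' i := hiter N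
  have hy' : H' y = y := by rw [hH', Function.update_of_ne (Ne.symm hxy), hy]
  by_cases hc : root H i = x
  · rw [if_pos hc, ← hroot, hc]
    have : root H' x = root H' y := by
      have hx' : H' x = y := Function.update_self x y H
      rw [← hx', root_parent hF']
    rw [this, root_of_fixed hy']
  · rw [if_neg hc, ← hroot]
    have : H' (root H i) = root H i := by
      rw [hH', Function.update_of_ne hc, root_fixed h]
    rw [root_of_fixed this]

lemma isForest_mergeStep {N : ℕ} {H : Fin N → Fin N} (h : IsForest H)
    (p : Fin N × Fin N) : IsForest (mergeStep H p) := by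
  unfold mergeStep
  split
  · exact h
  · exact isForest_update h (root_fixed h p.1) (root_fixed h p.2) (by assumption)

lemma mergeStep_persist {N : ℕ} {H : Fin N → Fin N} (h : IsForest H)
    (p : Fin N × Fin N) {a b : Fin N} (hab : root H a = root H b) :
    root (mergeStep H p) a = root (mergeStep H p) b := by
  unfold mergeStep
  split
  · exact hab
  · rw [root_update h (root_fixed h p.1) (root_fixed h p.2) (by assumption),
      root_update h (root_fixed h p.1) (root_fixed h p.2) (by assumption), hab]

lemma mergeStep_join {N : ℕ} {H : Fin N → Fin N} (h : IsForest H)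
    (p : Fin N × Fin N) : root (mergeStep H p) p.1 = root (mergeStep H p) p.2 := by
  unfold mergeStep
  split
  · assumption
  · rename_i hne
    rw [root_update h (root_fixed h p.1) (root_fixed h p.2) hne,
      root_update h (root_fixed h p.1) (root_fixed h p.2) hne,
      if_pos rfl, if_neg (Ne.symm hne)]

lemma isForest_foldl {N : ℕ} {H : Fin N → Fin N} (h : IsForest H)
    (l : List (Fin N × Fin N)) : IsForest (l.foldl mergeStep H) := by
  induction l generalizing H with
  | nil => exact h
  | cons p l ih => exact ih (isForest_mergeStep h p)

lemma persist_foldl {N : ℕ} {H : Fin N → Fin N} (h : IsForest H)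
    (l : List (Fin N × Fin N)) {a b : Fin N} (hab : root H a = root H b) :
    root (l.foldl mergeStep H) a = root (l.foldl mergeStep H) b := by
  induction l generalizing H with
  | nil => exact hab
  | cons p l ih => exact ih (isForest_mergeStep h p) (mergeStep_persist h p hab)

/-- Completeness and persistence: (1) every visited pair ends up with a common
root in the final state; (2) having a common root is monotone along the
prefixes of the list of merges: once two points acquire a common root, later
merge operations never separate them. -/
theorem fof_complete_persistent {N : ℕ} (L : List (Fin N × Fin N)) :
    (∀ i j : Fin N, (i, j) ∈ L → root (runFOF L) i = root (runFOF L) j) ∧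
      (∀ a b : Fin N, ∀ k m : ℕ, k ≤ m →
        root (runFOF (L.take k)) a = root (runFOF (L.take k)) b →
        root (runFOF (L.take m)) a = root (runFOF (L.take m)) b) := by
  have hid : IsForest (id : Fin N → Fin N) := ⟨fun _ => 0, fun i hi => absurd rfl hi⟩
  constructor
  · intro i j hij
    obtain ⟨l1, l2, rfl⟩ := List.append_of_mem hij
    have hF1 : IsForest (runFOF l1) := isForest_foldl hid l1
    show root ((l1 ++ (i, j) :: l2).foldl mergeStep id) i =
      root ((l1 ++ (i, j) :: l2).foldl mergeStep id) j
    rw [List.foldl_append, List.foldl_cons]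
    exact persist_foldl (isForest_mergeStep hF1 (i, j)) l2 (mergeStep_join hF1 (i, j))
  · intro a b k m hkm hab
    have htake : L.take m = L.take k ++ (L.drop k).take (m - k) := by
      rw [← List.take_add]
      congr 1; omega
    show root ((L.take m).foldl mergeStep id) a = root ((L.take m).foldl mergeStep id) b
    rw [htake, List.foldl_append]
    exact persist_foldl (isForest_foldl hid (L.take k)) _ hab
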